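/- Let φ = νñ.σ be a well-formed frame w.r.t. a restricted name s ∈ ñ, and suppose s is not deducible from φ (φ ⊬ s). Then for every occurrence q_s of the name s in yσ (y ∈ dom(σ)) there exists a position q < q_s such that yσ|_q is a ciphertext (its head symbol is enc or enca) and s occurs in the plaintext part, i.e. q·1 ≤ q_s. -/

import Mathlib

namespace Crypto

/-- Terms of the free algebra over the cryptographic signature
    Σ = {enc, dec, enca, deca, pub, priv, pair, π₁ (fst), π₂ (snd), sign, check, retrieve}
    together with the constant ok, variables and names. -/
inductive Term : Type where
  | var : ℕ → Term
  | name : ℕ → Term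
  | ok : Term
  | pub : Term → Term
  | priv : Term → Term
  | fst : Term → Term
  | snd : Term → Term
  | retrieve : Term → Term
  | pair : Term → Term → Term
  | sign : Term → Term → Term
  | dec : Term → Term → Term
  | deca : Term → Term → Term
  | enc : Term → Term → Term → Term
  | enca : Term → Term → Term → Term
  | check : Term → Term → Term → Term
deriving DecidableEq

namespace Term

/-- Application of a substitution of terms for variables. -/
def subst (θ : ℕ → Term) : Term → Term
  | var x => θ x
  | name n => name n
  | ok => ok
  | pub t => pub (t.subst θ)
  | priv t => priv (t.subst θ)
  | fst t => fst (t.subst θ)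
  | snd t => snd (t.subst θ)
  | retrieve t => retrieve (t.subst θ)
  | pair a b => pair (a.subst θ) (b.subst θ)
  | sign a b => sign (a.subst θ) (b.subst θ)
  | dec a b => dec (a.subst θ) (b.subst θ)
  | deca a b => deca (a.subst θ) (b.subst θ)
  | enc a b c => enc (a.subst θ) (b.subst θ) (c.subst θ)
  | enca a b c => enca (a.subst θ) (b.subst θ) (c.subst θ)
  | check a b c => check (a.subst θ) (b.subst θ) (c.subst θ)

/-- Application of a substitution of terms for names. -/
def nsubst (θ : ℕ → Term) : Term → Term
  | var x => var x
  | name n => θ n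
  | ok => ok
  | pub t => pub (t.nsubst θ)
  | priv t => priv (t.nsubst θ)
  | fst t => fst (t.nsubst θ)
  | snd t => snd (t.nsubst θ)
  | retrieve t => retrieve (t.nsubst θ)
  | pair a b => pair (a.nsubst θ) (b.nsubst θ)
  | sign a b => sign (a.nsubst θ) (b.nsubst θ)
  | dec a b => dec (a.nsubst θ) (b.nsubst θ)
  | deca a b => deca (a.nsubst θ) (b.nsubst θ)
  | enc a b c => enc (a.nsubst θ) (b.nsubst θ) (c.nsubst θ)
  | enca a b c => enca (a.nsubst θ) (b.nsubst θ) (c.nsubst θ)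
  | check a b c => check (a.nsubst θ) (b.nsubst θ) (c.nsubst θ)

/-- Replacement of every occurrence of the name `s` by the term `M` : `T[s ↦ M]`. -/
def substName (s : ℕ) (M : Term) (t : Term) : Term :=
  t.nsubst fun n => if n = s then M else name n

/-- Renaming of names by names. -/
def renameNames (σ : ℕ → ℕ) (t : Term) : Term :=
  t.nsubst fun n => name (σ n)

/-- The set of variables of a term. -/
def vars : Term → Finset ℕ
  | var x => {x}
  | name _ => ∅
  | ok => ∅
  | pub t => t.vars
  | priv t => t.vars
  | fst t => t.vars
  | snd t => t.vars
  | retrieve t => t.vars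
  | pair a b => a.vars ∪ b.vars
  | sign a b => a.vars ∪ b.vars
  | dec a b => a.vars ∪ b.vars
  | deca a b => a.vars ∪ b.vars
  | enc a b c => a.vars ∪ b.vars ∪ c.vars
  | enca a b c => a.vars ∪ b.vars ∪ c.vars
  | check a b c => a.vars ∪ b.vars ∪ c.vars

/-- The set of names of a term. -/
def names : Term → Finset ℕ
  | var _ => ∅
  | name n => {n}
  | ok => ∅
  | pub t => t.names
  | priv t => t.names
  | fst t => t.names
  | snd t => t.names
  | retrieve t => t.names
  | pair a b => a.names ∪ b.names
  | sign a b => a.names ∪ b.names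
  | dec a b => a.names ∪ b.names
  | deca a b => a.names ∪ b.names
  | enc a b c => a.names ∪ b.names ∪ c.names
  | enca a b c => a.names ∪ b.names ∪ c.names
  | check a b c => a.names ∪ b.names ∪ c.names

/-- A term is ground (closed) if it has no variables. -/
def Ground (t : Term) : Prop := t.vars = ∅

/-- The term contains no occurrence of the symbol priv. -/
def noPriv : Term → Prop
  | var _ => True
  | name _ => True
  | ok => True
  | pub t => t.noPriv
  | priv _ => False
  | fst t => t.noPriv
  | snd t => t.noPriv
  | retrieve t => t.noPriv
  | pair a b => a.noPriv ∧ b.noPriv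
  | sign a b => a.noPriv ∧ b.noPriv
  | dec a b => a.noPriv ∧ b.noPriv
  | deca a b => a.noPriv ∧ b.noPriv
  | enc a b c => a.noPriv ∧ b.noPriv ∧ c.noPriv
  | enca a b c => a.noPriv ∧ b.noPriv ∧ c.noPriv
  | check a b c => a.noPriv ∧ b.noPriv ∧ c.noPriv

/-- The term contains no destructor symbol (π₁, π₂, dec, deca, check, retrieve). -/
def noDestr : Term → Prop
  | var _ => True
  | name _ => True
  | ok => True
  | pub t => t.noDestr
  | priv t => t.noDestr
  | fst _ => False
  | snd _ => False
  | retrieve _ => False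
  | pair a b => a.noDestr ∧ b.noDestr
  | sign a b => a.noDestr ∧ b.noDestr
  | dec _ _ => False
  | deca _ _ => False
  | enc a b c => a.noDestr ∧ b.noDestr ∧ c.noDestr
  | enca a b c => a.noDestr ∧ b.noDestr ∧ c.noDestr
  | check _ _ _ => False

/-- Subterm at a position (positions are lists of positive integers). -/
def get? : Term → List ℕ → Option Term
  | t, [] => some t
  | pub t, 1 :: p => t.get? p
  | priv t, 1 :: p => t.get? p
  | fst t, 1 :: p => t.get? p
  | snd t, 1 :: p => t.get? p
  | retrieve t, 1 :: p => t.get? p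
  | pair a _, 1 :: p => a.get? p
  | pair _ b, 2 :: p => b.get? p
  | sign a _, 1 :: p => a.get? p
  | sign _ b, 2 :: p => b.get? p
  | dec a _, 1 :: p => a.get? p
  | dec _ b, 2 :: p => b.get? p
  | deca a _, 1 :: p => a.get? p
  | deca _ b, 2 :: p => b.get? p
  | enc a _ _, 1 :: p => a.get? p
  | enc _ b _, 2 :: p => b.get? p
  | enc _ _ c, 3 :: p => c.get? p
  | enca a _ _, 1 :: p => a.get? p
  | enca _ b _, 2 :: p => b.get? p
  | enca _ _ c, 3 :: p => c.get? p
  | check a _ _, 1 :: p => a.get? p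
  | check _ b _, 2 :: p => b.get? p
  | check _ _ c, 3 :: p => c.get? p
  | _, _ => none

/-- Depth of a term (variables, names and constants have depth 0). -/
def depth : Term → ℕ
  | var _ => 0
  | name _ => 0
  | ok => 0
  | pub t => t.depth + 1
  | priv t => t.depth + 1
  | fst t => t.depth + 1
  | snd t => t.depth + 1
  | retrieve t => t.depth + 1
  | pair a b => max a.depth b.depth + 1
  | sign a b => max a.depth b.depth + 1
  | dec a b => max a.depth b.depth + 1
  | deca a b => max a.depth b.depth + 1
  | enc a b c => max a.depth (max b.depth c.depth) + 1
  | enca a b c => max a.depth (max b.depth c.depth) + 1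
  | check a b c => max a.depth (max b.depth c.depth) + 1

/-- Number of occurrences of the variable `x` in a term. -/
def countVar (x : ℕ) : Term → ℕ
  | var y => if y = x then 1 else 0
  | name _ => 0
  | ok => 0
  | pub t => t.countVar x
  | priv t => t.countVar x
  | fst t => t.countVar x
  | snd t => t.countVar x
  | retrieve t => t.countVar x
  | pair a b => a.countVar x + b.countVar x
  | sign a b => a.countVar x + b.countVar x
  | dec a b => a.countVar x + b.countVar x
  | deca a b => a.countVar x + b.countVar x
  | enc a b c => a.countVar x + b.countVar x + c.countVar x
  | enca a b c => a.countVar x + b.countVar x + c.countVar x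
  | check a b c => a.countVar x + b.countVar x + c.countVar x

end Term

open Term

/-- Identifiers of the six rewrite rules of R_E. -/
inductive RuleId : Type where
  | p1 | p2 | rdec | rdeca | rcheck | rretrieve
deriving DecidableEq

/-- Left-hand sides of the rules of R_E (with scheme variables var 1, var 2, var 3). -/
def lhs : RuleId → Term
  | .p1 => .fst (.pair (.var 1) (.var 2))
  | .p2 => .snd (.pair (.var 1) (.var 2))
  | .rdec => .dec (.enc (.var 1) (.var 2) (.var 3)) (.var 2)
  | .rdeca => .deca (.enca (.var 1) (.pub (.var 2)) (.var 3)) (.priv (.var 2))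
  | .rcheck => .check (.var 1) (.sign (.var 1) (.priv (.var 2))) (.pub (.var 2))
  | .rretrieve => .retrieve (.sign (.var 1) (.var 2))

/-- Right-hand sides of the rules of R_E. -/
def rhs : RuleId → Term
  | .p1 => .var 1
  | .p2 => .var 2
  | .rdec => .var 1
  | .rdeca => .var 1
  | .rcheck => .ok
  | .rretrieve => .var 1

/-- `Rule u v` : the pair (u, v) is an instance of one of the six rules of R_E. -/
def Rule (u v : Term) : Prop :=
  ∃ (i : RuleId) (θ : ℕ → Term), u = (lhs i).subst θ ∧ v = (rhs i).subst θ

/-- One-step rewriting with R_E, closed under all contexts. -/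
inductive Step : Term → Term → Prop where
  | rule {u v} : Rule u v → Step u v
  | cpub {a a'} : Step a a' → Step (.pub a) (.pub a')
  | cpriv {a a'} : Step a a' → Step (.priv a) (.priv a')
  | cfst {a a'} : Step a a' → Step (.fst a) (.fst a')
  | csnd {a a'} : Step a a' → Step (.snd a) (.snd a')
  | cretrieve {a a'} : Step a a' → Step (.retrieve a) (.retrieve a')
  | cpair₁ {a a' b} : Step a a' → Step (.pair a b) (.pair a' b)
  | cpair₂ {a b b'} : Step b b' → Step (.pair a b) (.pair a b')
  | csign₁ {a a' b} : Step a a' → Step (.sign a b) (.sign a' b)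
  | csign₂ {a b b'} : Step b b' → Step (.sign a b) (.sign a b')
  | cdec₁ {a a' b} : Step a a' → Step (.dec a b) (.dec a' b)
  | cdec₂ {a b b'} : Step b b' → Step (.dec a b) (.dec a b')
  | cdeca₁ {a a' b} : Step a a' → Step (.deca a b) (.deca a' b)
  | cdeca₂ {a b b'} : Step b b' → Step (.deca a b) (.deca a b')
  | cenc₁ {a a' b c} : Step a a' → Step (.enc a b c) (.enc a' b c)
  | cenc₂ {a b b' c} : Step b b' → Step (.enc a b c) (.enc a b' c)
  | cenc₃ {a b c c'} : Step c c' → Step (.enc a b c) (.enc a b c')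
  | cenca₁ {a a' b c} : Step a a' → Step (.enca a b c) (.enca a' b c)
  | cenca₂ {a b b' c} : Step b b' → Step (.enca a b c) (.enca a b' c)
  | cenca₃ {a b c c'} : Step c c' → Step (.enca a b c) (.enca a b c')
  | ccheck₁ {a a' b c} : Step a a' → Step (.check a b c) (.check a' b c)
  | ccheck₂ {a b b' c} : Step b b' → Step (.check a b c) (.check a b' c)
  | ccheck₃ {a b c c'} : Step c c' → Step (.check a b c) (.check a b c')

/-- Reflexive-transitive closure of rewriting. -/
def Steps : Term → Term → Prop := Relation.ReflTransGen Step

/-- The equational theory E : convertibility generated by R_E. -/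
inductive EqE : Term → Term → Prop where
  | step {a b} : Step a b → EqE a b
  | refl (a) : EqE a a
  | symm {a b} : EqE a b → EqE b a
  | trans {a b c} : EqE a b → EqE b c → EqE a c

/-- A term is in R_E-normal form if no rewrite step applies to it. -/
def NormalForm (t : Term) : Prop := ∀ u, ¬ Step t u

/-- A frame νñ.σ : a finite set of restricted names, a finite domain of variables,
    and a substitution. -/
structure Frame where
  restricted : Finset ℕ
  dom : Finset ℕ
  assign : ℕ → Term

/-- A term is public w.r.t. a frame if it uses no restricted name and no priv symbol. -/
def PublicFor (φ : Frame) (t : Term) : Prop :=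
  (∀ n ∈ t.names, n ∉ φ.restricted) ∧ t.noPriv

/-- The range of (the substitution of) a frame. -/
def ran (φ : Frame) : Set Term := {t | ∃ x ∈ φ.dom, t = φ.assign x}

/-- Dolev-Yao deducibility from a frame, modulo the equational theory E. -/
inductive Deduces (φ : Frame) : Term → Prop where
  | ax {x : ℕ} : x ∈ φ.dom → Deduces φ (φ.assign x)
  | free {n : ℕ} : n ∉ φ.restricted → Deduces φ (.name n)
  | dok : Deduces φ .ok
  | dpub {t} : Deduces φ t → Deduces φ (.pub t)
  | dfst {t} : Deduces φ t → Deduces φ (.fst t)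
  | dsnd {t} : Deduces φ t → Deduces φ (.snd t)
  | dretrieve {t} : Deduces φ t → Deduces φ (.retrieve t)
  | dpair {a b} : Deduces φ a → Deduces φ b → Deduces φ (.pair a b)
  | dsign {a b} : Deduces φ a → Deduces φ b → Deduces φ (.sign a b)
  | ddec {a b} : Deduces φ a → Deduces φ b → Deduces φ (.dec a b)
  | ddeca {a b} : Deduces φ a → Deduces φ b → Deduces φ (.deca a b)
  | denc {a b c} : Deduces φ a → Deduces φ b → Deduces φ c → Deduces φ (.enc a b c)
  | denca {a b c} : Deduces φ a → Deduces φ b → Deduces φ c → Deduces φ (.enca a b c)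
  | dcheck {a b c} : Deduces φ a → Deduces φ b → Deduces φ c → Deduces φ (.check a b c)
  | deq {t t'} : Deduces φ t → EqE t t' → Deduces φ t'

/-- A frame passes the public test (U,V) if Uσ =_E Vσ. -/
def passes (φ : Frame) (U V : Term) : Prop :=
  EqE (U.subst φ.assign) (V.subst φ.assign)

/-- Static equivalence: the two frames have the same domain and pass the same public tests. -/
def StaticEq (φ ψ : Frame) : Prop :=
  φ.dom = ψ.dom ∧
  ∀ U V : Term, PublicFor φ U → PublicFor ψ U → PublicFor φ V → PublicFor ψ V →
    U.vars ⊆ φ.dom → V.vars ⊆ φ.dom → (passes φ U V ↔ passes ψ U V)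

/-- The frame φ[s ↦ M] : substitute M for the name s in every term of the range. -/
def substFrameName (s : ℕ) (M : Term) (φ : Frame) : Frame :=
  ⟨φ.restricted, φ.dom, fun x => (φ.assign x).substName s M⟩

/-- `IsEnc t a k r` : t is the (symmetric or asymmetric) encryption of a with key k
    and randomness r. -/
inductive IsEnc : Term → Term → Term → Term → Prop where
  | enc {a k r} : IsEnc (.enc a k r) a k r
  | enca {a k r} : IsEnc (.enca a k r) a k r

/-- A term is a ciphertext (head symbol enc or enca). -/
def isCipher (t : Term) : Prop := ∃ a k r, IsEnc t a k r

/-- Agent encryption w.r.t. a set of names: the randomness argument is one of those names. -/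
def AgentEnc (ns : Finset ℕ) (t : Term) : Prop :=
  ∃ a k r, r ∈ ns ∧ IsEnc t a k (.name r)

/-- The encryption `t` is probabilistic w.r.t. the set S of terms: its randomness occurs
    in members of S only as the randomness of the identical ciphertext. -/
def ProbEnc (S : Set Term) (t : Term) : Prop :=
  ∀ a k r, IsEnc t a k r →
    ∀ W ∈ S, ∀ p : List ℕ, W.get? p = some r →
      ∃ q : List ℕ, p = q ++ [3] ∧ W.get? q = some t

/-- The name s occurs in no key, randomness, pub/priv or signature-key subterm of U. -/
def KeyRandOk (s : ℕ) (U : Term) : Prop :=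
  ∀ (p : List ℕ) (t : Term), U.get? p = some t →
    (∀ m k r, t = .enc m k r → s ∉ k.names ∧ s ∉ r.names) ∧
    (∀ m k r, t = .enca m k r → s ∉ k.names ∧ s ∉ r.names) ∧
    (∀ m k, t = .sign m k → s ∉ k.names) ∧
    (∀ w, t = .pub w → s ∉ w.names) ∧
    (∀ w, t = .priv w → s ∉ w.names)

/-- Well-formed frame w.r.t. the name s. -/
def WellFormed (φ : Frame) (s : ℕ) : Prop :=
  (∀ x ∈ φ.dom, ∀ (p : List ℕ) (t : Term), (φ.assign x).get? p = some t → isCipher t →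
      AgentEnc (φ.restricted \ {s}) t ∧ ProbEnc (ran φ) t) ∧
  (∀ x ∈ φ.dom, KeyRandOk s (φ.assign x)) ∧
  (∀ x ∈ φ.dom, (φ.assign x).noDestr)

/-- Head symbol is pair or sign. -/
def IsPairOrSign : Term → Prop
  | .pair _ _ => True
  | .sign _ _ => True
  | _ => False

/-- Extended well-formed frame w.r.t. the name s. -/
def ExtWellFormed (φ : Frame) (s : ℕ) : Prop :=
  (∀ x ∈ φ.dom, NormalForm (φ.assign x)) ∧
  (∀ x ∈ φ.dom, ∀ (p : List ℕ) (t : Term), (φ.assign x).get? p = some t →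
      AgentEnc φ.restricted t → ProbEnc (ran φ) t) ∧
  (∀ x ∈ φ.dom, ∀ qs : List ℕ, (φ.assign x).get? qs = some (.name s) →
      ∃ (qe : List ℕ) (t : Term), (φ.assign x).get? qe = some t ∧
        AgentEnc (φ.restricted \ {s}) t ∧ (qe ++ [1]) <+: qs ∧
        ∀ (q : List ℕ) (u : Term), qe <+: q → q ≠ qe → q <+: qs → q ≠ qs →
          (φ.assign x).get? q = some u → IsPairOrSign u)

/-- W is a subterm of some term in the range of the frame. -/
def InRanSubterm (φ : Frame) (W : Term) : Prop :=
  ∃ y ∈ φ.dom, ∃ p : List ℕ, (φ.assign y).get? p = some W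

/-- Every occurrence of the name s in W lies strictly below an encryption. -/
def SAlwaysUnderEnc (s : ℕ) (W : Term) : Prop :=
  ∀ qs : List ℕ, W.get? qs = some (.name s) →
    ∃ (q : List ℕ) (t : Term), q <+: qs ∧ q ≠ qs ∧ W.get? q = some t ∧ isCipher t

/-- Head symbol is a destructor. -/
def IsDestrHead : Term → Prop
  | .fst _ => True
  | .snd _ => True
  | .dec _ _ => True
  | .deca _ _ => True
  | .check _ _ _ => True
  | .retrieve _ => True
  | _ => False

end Crypto

namespace Crypto

/-! Walk down from the root of `yσ` to the occurrence of `s`, keeping the current subterm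
deducible. There are no destructors, and `s` never sits inside a key, a randomness, a `pub`,
a `priv` or a signing key, so each step either enters the plaintext of a ciphertext, and we are
done, or enters a component of a pair or the message of a signature, which the intruder
recovers with `π₁`, `π₂` or `retrieve`. A walk that never meets a ciphertext would thus
end with `s` deducible. -/

namespace Term

@[simp]
theorem get?_nil (t : Term) : t.get? [] = some t := by
  cases t <;> rfl

theorem get?_append (t : Term) (p p' : List ℕ) :
    t.get? (p ++ p') = (t.get? p).bind (·.get? p') := by
  induction p generalizing t with
  | nil => simp
  | cons i p ih => cases t <;> rcases i with _ | _ | _ | _ | i <;> simp [get?, ih]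

theorem get?_cons (t : Term) (i : ℕ) (p : List ℕ) :
    t.get? (i :: p) = (t.get? [i]).bind (·.get? p) :=
  get?_append t [i] p

theorem mem_names_of_get? {s : ℕ} {t : Term} {p : List ℕ} (h : t.get? p = some (.name s)) :
    s ∈ t.names := by
  induction p generalizing t with
  | nil => simp_all [names]
  | cons i p ih =>
    cases t <;> rcases i with _ | _ | _ | _ | i <;> simp [get?] at h <;>
      simp [names, ih h]

theorem noDestr.get? {t u : Term} {p : List ℕ} (ht : t.noDestr) (h : t.get? p = some u) :
    u.noDestr := by
  induction p generalizing t with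
  | nil => simp_all
  | cons i p ih =>
    cases t <;> rcases i with _ | _ | _ | _ | i <;> simp [Term.get?] at h <;>
      simp only [noDestr] at ht <;> exact ih (by tauto) h

end Term

theorem KeyRandOk.get? {s : ℕ} {t u : Term} {p : List ℕ} (ht : KeyRandOk s t)
    (h : t.get? p = some u) : KeyRandOk s u := fun p' v hv =>
  ht (p ++ p') v (by simp [Term.get?_append, h, hv])

namespace Deduces

variable {φ : Frame} {a b : Term}

theorem of_pair_left (h : Deduces φ (.pair a b)) : Deduces φ a :=
  h.dfst.deq <| .step <| .rule
    ⟨.p1, fun n => if n = 1 then a else b, by simp [lhs, Term.subst], by simp [rhs, Term.subst]⟩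

theorem of_pair_right (h : Deduces φ (.pair a b)) : Deduces φ b :=
  h.dsnd.deq <| .step <| .rule
    ⟨.p2, fun n => if n = 1 then a else b, by simp [lhs, Term.subst], by simp [rhs, Term.subst]⟩

theorem of_sign_left (h : Deduces φ (.sign a b)) : Deduces φ a :=
  h.dretrieve.deq <| .step <| .rule ⟨.rretrieve, fun n => if n = 1 then a else b,
    by simp [lhs, Term.subst], by simp [rhs, Term.subst]⟩

end Deduces

@[simp]
theorem isCipher_enc {a k r : Term} : isCipher (.enc a k r) := ⟨a, k, r, .enc⟩

@[simp]
theorem isCipher_enca {a k r : Term} : isCipher (.enca a k r) := ⟨a, k, r, .enca⟩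

theorem isCipher_or_deduces_of_get?_singleton {s i : ℕ} {t c : Term} (hd : t.noDestr)
    (hk : KeyRandOk s t) (hc : t.get? [i] = some c) (hs : s ∈ c.names) :
    (isCipher t ∧ i = 1) ∨ ∀ φ : Frame, Deduces φ t → Deduces φ c := by
  have head := hk [] t (Term.get?_nil t)
  cases t <;> rcases i with _ | _ | _ | _ | i <;> simp [Term.get?] at hc <;> subst hc <;>
    simp_all [Term.noDestr]
  exacts [.inr fun _ => Deduces.of_pair_left, fun _ => Deduces.of_pair_right,
    .inr fun _ => Deduces.of_sign_left]

theorem exists_cipher_prefix_of_get?_eq_name {φ : Frame} {s : ℕ} (hnd : ¬ Deduces φ (.name s))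
    {t : Term} (ht : Deduces φ t) (hd : t.noDestr) (hk : KeyRandOk s t) {qs : List ℕ}
    (hq : t.get? qs = some (.name s)) :
    ∃ (q : List ℕ) (u : Term), t.get? q = some u ∧ isCipher u ∧ (q ++ [1]) <+: qs := by
  induction qs generalizing t with
  | nil =>
    obtain rfl : t = .name s := by simpa using hq
    exact absurd ht hnd
  | cons i p ih =>
    obtain ⟨c, hc, hp⟩ := Option.bind_eq_some_iff.mp (t.get?_cons i p ▸ hq)
    rcases isCipher_or_deduces_of_get?_singleton hd hk hc (Term.mem_names_of_get? hp) with
      ⟨hcipher, rfl⟩ | hded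
    · exact ⟨[], t, t.get?_nil, hcipher, p, rfl⟩
    · obtain ⟨q, u, hu, hcu, hpre⟩ := ih (hded φ ht) (hd.get? hc) (hk.get? hc) hp
      exact ⟨i :: q, u, by simp [Term.get?_cons, hc, hu], hcu, by simpa using hpre⟩

theorem secret_under_encryption_general (φ : Frame) (s : ℕ)
    (hwf : WellFormed φ s) (hnd : ¬ Deduces φ (.name s))
    (y : ℕ) (hy : y ∈ φ.dom) (qs : List ℕ)
    (hq : (φ.assign y).get? qs = some (.name s)) :
    ∃ (q : List ℕ) (t : Term), (φ.assign y).get? q = some t ∧ isCipher t ∧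
      (q ++ [1]) <+: qs :=
  exists_cipher_prefix_of_get?_eq_name hnd (.ax hy) (hwf.2.2 y hy) (hwf.2.1 y hy) hq

/-- in a well-formed frame with s not deducible, every occurrence of s
    lies in the plaintext part of some ciphertext. -/
theorem secret_under_encryption (φ : Frame) (s : ℕ) (hs : s ∈ φ.restricted)
    (hwf : WellFormed φ s) (hnd : ¬ Deduces φ (.name s))
    (y : ℕ) (hy : y ∈ φ.dom) (qs : List ℕ)
    (hq : (φ.assign y).get? qs = some (.name s)) :
    ∃ (q : List ℕ) (t : Term), (φ.assign y).get? q = some t ∧ isCipher t ∧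
      (q ++ [1]) <+: qs :=
  secret_under_encryption_general φ s hwf hnd y hy qs hq

end Crypto
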